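/- For λ > 0 and p ∈ ℝ^4, let I²_{λ,p}(x) = Im( λ² (x̄ − p̄) dx / (|x−p|² (λ² + |x−p|²)) ) be the 1-instanton tail, viewed as an 𝔰𝔲(2)-valued 1-form with pointwise norm |I²_{λ,p}(x)| comparable to λ²/(|x−p|(λ²+|x−p|²)). Then ∫_{B^4 \ B_{λ/4}(p)} |I²_{λ,p}|² dx ≤ C λ² |log λ| for λ ∈ (0,1/2), with C independent of λ and p. -/

import Mathlib

/-!
The square of the tail is at most `λ² / (4 |x - p|⁴)` by `λ² + r² ≥ 2λr`. On the part of the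
unit ball where `|x - p| > 2` this is at most `λ²/64`, and on the annulus `λ/4 ≤ |x - p| ≤ 2`
the radial integral of `r⁻⁴` in dimension four is `4 |B⁴| log (8/λ)`, which is `O(|log λ|)`.
-/

open MeasureTheory Set Metric Real Module

local notation "ℝ⁴" => EuclideanSpace ℝ (Fin 4)

lemma pow_pred_mul_indicator_Icc_inv_pow {n : ℕ} (hn : 0 < n) {a b : ℝ} (ha : 0 < a) (y : ℝ) :
    y ^ (n - 1) * (Icc a b).indicator (fun r => (r ^ n)⁻¹) y =
      (Icc a b).indicator (fun r => r⁻¹) y := by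
  by_cases hy : y ∈ Icc a b
  · have hy0 : y ≠ 0 := (ha.trans_le hy.1).ne'
    rw [indicator_of_mem hy, indicator_of_mem hy]
    obtain ⟨m, rfl⟩ : ∃ m, n = m + 1 := ⟨n - 1, by omega⟩
    rw [Nat.add_sub_cancel]
    field_simp
    ring
  · simp [indicator_of_notMem hy]

section Radial

variable {E : Type*} [NormedAddCommGroup E] [NormedSpace ℝ E] [MeasurableSpace E] [BorelSpace E]
  [FiniteDimensional ℝ E] [Nontrivial E] (μ : Measure E) [μ.IsAddHaarMeasure]

lemma integrable_indicator_Icc_inv_pow_norm_sub (p : E) {a b : ℝ} (ha : 0 < a) :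
    Integrable
      (fun x => (Icc a b).indicator (fun r => (r ^ finrank ℝ E)⁻¹) ‖x - p‖) μ := by
  refine Integrable.comp_sub_right (f := fun x => (Icc a b).indicator _ ‖x‖) ?_ p
  rw [integrable_fun_norm_addHaar μ]
  simp_rw [smul_eq_mul, pow_pred_mul_indicator_Icc_inv_pow finrank_pos ha]
  refine ((integrable_indicator_iff measurableSet_Icc).2 ?_).integrableOn
  exact (continuousOn_inv₀.mono fun y hy => (ha.trans_le hy.1).ne').integrableOn_Icc

lemma integral_indicator_Icc_inv_pow_norm_sub (p : E) {a b : ℝ} (ha : 0 < a) (hab : a ≤ b) :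
    ∫ x, (Icc a b).indicator (fun r => (r ^ finrank ℝ E)⁻¹) ‖x - p‖ ∂μ =
      finrank ℝ E * μ.real (ball 0 1) * log (b / a) := by
  rw [integral_sub_right_eq_self (fun x => (Icc a b).indicator _ ‖x‖) p,
    integral_fun_norm_addHaar μ]
  simp_rw [smul_eq_mul, pow_pred_mul_indicator_Icc_inv_pow finrank_pos ha]
  rw [setIntegral_indicator measurableSet_Icc, inter_eq_right.2 ((Icc_subset_Ioi_iff hab).2 ha),
    integral_Icc_eq_integral_Ioc, ← intervalIntegral.integral_of_le hab,
    integral_inv_of_pos ha (ha.trans_le hab), nsmul_eq_mul, mul_assoc]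

end Radial

lemma instanton_tail_sq_le {l r : ℝ} (hl : 0 < l) (hr : 0 < r) :
    (l ^ 2 / (r * (l ^ 2 + r ^ 2))) ^ 2 ≤ l ^ 2 / 4 * (r ^ 4)⁻¹ := by
  have hamgm : l ^ 2 / (r * (l ^ 2 + r ^ 2)) ≤ l / (2 * r ^ 2) := by
    rw [div_le_div_iff₀ (by positivity) (by positivity)]
    nlinarith [mul_nonneg (mul_pos hl hr).le (sq_nonneg (l - r))]
  calc (l ^ 2 / (r * (l ^ 2 + r ^ 2))) ^ 2 ≤ (l / (2 * r ^ 2)) ^ 2 := by gcongr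
    _ = l ^ 2 / 4 * (r ^ 4)⁻¹ := by field_simp; ring

lemma inv_pow_four_le_indicator_Icc_add {a r : ℝ} (har : a ≤ r) :
    (r ^ 4)⁻¹ ≤ (Icc a 2).indicator (fun r => (r ^ 4)⁻¹) r + 1 / 16 := by
  by_cases hr2 : r ≤ 2
  · rw [indicator_of_mem (show r ∈ Icc a 2 from ⟨har, hr2⟩)]
    linarith
  · have h16 : (16 : ℝ) ≤ r ^ 4 := by
      nlinarith [pow_le_pow_left₀ zero_le_two (not_le.1 hr2).le 4]
    have hind : 0 ≤ (Icc a 2).indicator (fun r => (r ^ 4)⁻¹) r :=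
      indicator_nonneg (fun _ _ => by positivity) r
    calc (r ^ 4)⁻¹ ≤ 16⁻¹ := inv_anti₀ (by norm_num) h16
      _ ≤ _ := by linarith

lemma log_eight_div_add_le {l : ℝ} (hl : 0 < l) (hl2 : l < 1 / 2) :
    log (8 / l) + 1 / 64 ≤ 5 * |log l| := by
  have hlog : log (8 / l) = 3 * log 2 - log l := by
    rw [log_div (by norm_num) hl.ne', show (8 : ℝ) = 2 ^ 3 by norm_num, log_pow]
    push_cast
    ring
  have hlogl : log 2 ≤ -log l := by
    rw [← log_inv]
    exact log_le_log (by positivity) (by rw [le_inv_comm₀ two_pos hl]; linarith)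
  rw [hlog, abs_of_neg (by linarith [log_pos one_lt_two])]
  linarith [log_two_gt_d9]

lemma setIntegral_instanton_tail_sq_le {l : ℝ} (hl : 0 < l) (p : ℝ⁴) :
    ∫ x in {x : ℝ⁴ | ‖x‖ < 1 ∧ l / 4 ≤ ‖x - p‖},
        (l ^ 2 / (‖x - p‖ * (l ^ 2 + ‖x - p‖ ^ 2))) ^ 2 ≤
      l ^ 2 / 4 * (∫ x : ℝ⁴, (Icc (l / 4) 2).indicator (fun r => (r ^ 4)⁻¹) ‖x - p‖) +
        l ^ 2 / 64 * volume.real (ball (0 : ℝ⁴) 1) := by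
  set S := {x : ℝ⁴ | ‖x‖ < 1 ∧ l / 4 ≤ ‖x - p‖}
  set φ : ℝ → ℝ := (Icc (l / 4) 2).indicator fun r => (r ^ 4)⁻¹
  set ψ : ℝ⁴ → ℝ := (ball 0 1).indicator fun _ => 1 / 16
  set g : ℝ⁴ → ℝ := fun x => l ^ 2 / 4 * (φ ‖x - p‖ + ψ x)
  have hS : MeasurableSet S :=
    (measurableSet_lt (f := fun x => ‖x‖) (by fun_prop) measurable_const).inter
      (measurableSet_le (g := fun x => ‖x - p‖) measurable_const (by fun_prop))
  have hφ_int : Integrable fun x : ℝ⁴ => φ ‖x - p‖ := by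
    simpa only [finrank_euclideanSpace_fin] using
      integrable_indicator_Icc_inv_pow_norm_sub volume p (a := l / 4) (b := 2) (by positivity)
  have hψ_int : Integrable ψ :=
    (integrable_indicator_iff measurableSet_ball).2 (integrableOn_const measure_ball_lt_top.ne)
  have hg_int : Integrable g := (hφ_int.add hψ_int).const_mul _
  have hg_nonneg : 0 ≤ g := fun x =>
    mul_nonneg (by positivity) <| add_nonneg
      (indicator_nonneg (fun _ _ => by positivity) _)
      (indicator_nonneg (fun _ _ => by norm_num) _)
  have hbound : ∀ x ∈ S, (l ^ 2 / (‖x - p‖ * (l ^ 2 + ‖x - p‖ ^ 2))) ^ 2 ≤ g x := by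
    rintro x ⟨hx1, hx2⟩
    have hr : 0 < ‖x - p‖ := (by positivity : (0 : ℝ) < l / 4).trans_le hx2
    calc _ ≤ l ^ 2 / 4 * (‖x - p‖ ^ 4)⁻¹ := instanton_tail_sq_le hl hr
      _ ≤ g x := by
        simp only [g, ψ, indicator_of_mem (mem_ball_zero_iff.2 hx1)]
        gcongr
        exact inv_pow_four_le_indicator_Icc_add hx2
  calc _ ≤ ∫ x in S, g x :=
        integral_mono_of_nonneg (ae_of_all _ fun x => by positivity) hg_int.integrableOn
          ((ae_restrict_iff' hS).2 (ae_of_all _ hbound))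
    _ ≤ ∫ x, g x := setIntegral_le_integral hg_int (ae_of_all _ hg_nonneg)
    _ = _ := by
        rw [integral_const_mul, integral_add hφ_int hψ_int,
          integral_indicator_const _ measurableSet_ball, smul_eq_mul]
        ring

/-- The instanton tail `I²_{λ,p}`, with pointwise norm comparable to
`λ²/(|x−p|(λ²+|x−p|²))`, satisfies
`∫_{B⁴ \ B_{λ/4}(p)} |I²_{λ,p}|² dx ≤ C λ² |log λ|` for `λ ∈ (0,1/2)`,
with `C` independent of `λ` and `p`. -/
theorem stmt_6 :
    ∃ C > (0 : ℝ), ∀ l : ℝ, 0 < l → l < 1 / 2 →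
      ∀ p : EuclideanSpace ℝ (Fin 4),
        (∫ x in {x : EuclideanSpace ℝ (Fin 4) | ‖x‖ < 1 ∧ l / 4 ≤ ‖x - p‖},
            (l ^ 2 / (‖x - p‖ * (l ^ 2 + ‖x - p‖ ^ 2))) ^ 2) ≤
          C * l ^ 2 * |Real.log l| := by
  set c := volume.real (ball (0 : ℝ⁴) 1)
  have hc : 0 < c :=
    ENNReal.toReal_pos (measure_ball_pos volume _ one_pos).ne' measure_ball_lt_top.ne
  refine ⟨5 * c, by positivity, fun l hl hl2 p => ?_⟩
  have hannulus := integral_indicator_Icc_inv_pow_norm_sub volume p (a := l / 4) (b := 2)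
    (by positivity) (by linarith)
  rw [finrank_euclideanSpace_fin, Nat.cast_ofNat, show 2 / (l / 4) = 8 / l by field_simp; ring]
    at hannulus
  calc _ ≤ l ^ 2 / 4 * (4 * c * log (8 / l)) + l ^ 2 / 64 * c := by
        simpa only [hannulus] using setIntegral_instanton_tail_sq_le hl p
    _ = c * l ^ 2 * (log (8 / l) + 1 / 64) := by ring
    _ ≤ c * l ^ 2 * (5 * |log l|) := by gcongr; exact log_eight_div_add_le hl hl2
    _ = 5 * c * l ^ 2 * |log l| := by ring
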